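/- Let F be a field of characteristic ≠ 2 and n < d. Then the canonical algebra homomorphism ψ: S_F(n,d) → End_{S_F(n,d)}(S_F^-(n,d)) (from the Schur algebra to the endomorphism ring of S⁻ as a right S_F(n,d)-module, given by left multiplication) fails to be injective. In particular, the element ξ_{Γ_1}, where Γ_1 is the multigraph with all d edges joining 1' to 1, satisfies ξ_{Γ_1}·S_F^-(n,d) = 0. -/

import Mathlib

/-! `ξ_{Γ₁} m` only reads `m` at the constant configuration `(1,…,1)`, which every permutation
fixes, so there `m` is a linear form on tensor space transforming by the sign under `S_d`.
Since `n < d`, every basis tensor `e_u` has a repeated index, so some transposition fixes `e_u`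
while changing the sign of the form; as `2 ≠ 0`, the form vanishes (dually, `Λ^d(Fⁿ) = 0`). -/

/-- A `ℤ/2ℤ`-grading of a ring `AS`: a subring `S` (the even part) and an additive subgroup
`Sm` (the odd part) with `S·Sm ⊆ Sm`, `Sm·S ⊆ Sm` and `Sm·Sm ⊆ S`.  (That
`AS = S ⊕ Sm` is imposed separately as a hypothesis.) -/
structure GradedPair (AS : Type*) [Ring AS] where
  S : Subring AS
  Sm : AddSubgroup AS
  smul_mem : ∀ s ∈ S, ∀ x ∈ Sm, s * x ∈ Sm
  mul_smem : ∀ x ∈ Sm, ∀ s ∈ S, x * s ∈ Sm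
  mm_mem : ∀ x ∈ Sm, ∀ y ∈ Sm, x * y ∈ S
noncomputable section

open Equiv

variable (F : Type*) [Field F] (n d : ℕ)

/-- The tensor space `(Fⁿ)^{⊗d}`, realized as `F[I(n,d)]` with `I(n,d) = Fin d → Fin n`. -/
abbrev TensorSpace := (Fin d → Fin n) → F

/-- `S_d`-equivariance of an endomorphism of tensor space. -/
def SCond (T : Module.End F (TensorSpace F n d)) : Prop :=
  ∀ (w : Equiv.Perm (Fin d)) (f : TensorSpace F n d) (v : Fin d → Fin n),
    T (fun u => f (u ∘ w)) v = T f (v ∘ w)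

/-- Sign-twisted `S_d`-equivariance of an endomorphism of tensor space. -/
def MCond (T : Module.End F (TensorSpace F n d)) : Prop :=
  ∀ (w : Equiv.Perm (Fin d)) (f : TensorSpace F n d) (v : Fin d → Fin n),
    T (fun u => f (u ∘ w)) v = ((Equiv.Perm.sign w : ℤ) : F) * T f (v ∘ w)

/-- The Schur algebra `S_F(n,d)` as a subring of `End((Fⁿ)^{⊗d})`. -/
def schurSubring : Subring (Module.End F (TensorSpace F n d)) where
  carrier := {T | SCond F n d T}
  one_mem' := by intro w f v; rfl
  mul_mem' := by
    intro a b ha hb w f v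
    rw [Module.End.mul_apply, Module.End.mul_apply]
    have h1 : b (fun u => f (u ∘ w)) = fun u => b f (u ∘ w) := funext (hb w f)
    rw [h1]
    exact ha w (b f) v
  add_mem' := by
    intro a b ha hb w f v
    simp only [LinearMap.add_apply, Pi.add_apply, ha w f v, hb w f v]
  zero_mem' := by intro w f v; simp
  neg_mem' := by
    intro a ha w f v
    simp only [LinearMap.neg_apply, Pi.neg_apply, ha w f v]

/-- The bimodule `S_F⁻(n,d)` as an additive subgroup of `End((Fⁿ)^{⊗d})`. -/
def schurMinusSubgroup : AddSubgroup (Module.End F (TensorSpace F n d)) where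
  carrier := {T | MCond F n d T}
  add_mem' := by
    intro a b ha hb w f v
    simp only [LinearMap.add_apply, Pi.add_apply, ha w f v, hb w f v]
    ring
  zero_mem' := by intro w f v; simp
  neg_mem' := by
    intro a ha w f v
    simp only [LinearMap.neg_apply, Pi.neg_apply, ha w f v]
    ring

lemma sign_sq (w : Equiv.Perm (Fin d)) :
    ((Equiv.Perm.sign w : ℤ) : F) * ((Equiv.Perm.sign w : ℤ) : F) = 1 := by
  rcases Int.units_eq_one_or (Equiv.Perm.sign w) with h | h <;> simp [h]

/-- The `ℤ/2ℤ`-grading `AS_F(n,d) = S_F(n,d) ⊕ S_F⁻(n,d)` of the alternating Schur algebra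
inside `End((Fⁿ)^{⊗d})`. -/
def schurGradedPair : GradedPair (Module.End F (TensorSpace F n d)) where
  S := schurSubring F n d
  Sm := schurMinusSubgroup F n d
  smul_mem := by
    intro s hs x hx w f v
    rw [Module.End.mul_apply, Module.End.mul_apply]
    have h1 : x (fun u => f (u ∘ w)) =
        ((Equiv.Perm.sign w : ℤ) : F) • fun u => x f (u ∘ w) := by
      funext u
      simpa using hx w f u
    rw [h1, map_smul]
    simp only [Pi.smul_apply, smul_eq_mul]
    rw [hs w (x f) v]
  mul_smem := by
    intro x hx s hs w f v
    rw [Module.End.mul_apply, Module.End.mul_apply]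
    have h1 : s (fun u => f (u ∘ w)) = fun u => s f (u ∘ w) := funext (hs w f)
    rw [h1]
    exact hx w (s f) v
  mm_mem := by
    intro x hx y hy w f v
    rw [Module.End.mul_apply, Module.End.mul_apply]
    have h1 : y (fun u => f (u ∘ w)) =
        ((Equiv.Perm.sign w : ℤ) : F) • fun u => y f (u ∘ w) := by
      funext u
      simpa using hy w f u
    rw [h1, map_smul]
    simp only [Pi.smul_apply, smul_eq_mul]
    rw [hx w (y f) v, ← mul_assoc, sign_sq, one_mul]

/-- The integral operator associated to the integral kernel `κ`. -/
def intOp {X Y : Type*} [Fintype Y] (κ : X → Y → F) : (Y → F) →ₗ[F] (X → F) where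
  toFun f x := ∑ y, κ x y * f y
  map_add' f g := by
    funext x
    simp [mul_add, Finset.sum_add_distrib]
  map_smul' c f := by
    funext x
    simp only [Pi.smul_apply, smul_eq_mul, RingHom.id_apply, Finset.mul_sum]
    exact Finset.sum_congr rfl (fun y _ => by ring)

open scoped Classical in
/-- The basis element `ξ_{Γ₁}` of the Schur algebra, where `Γ₁` is the bipartite multigraph
all of whose `d` edges join `1'` to `1`: the integral operator whose kernel is the indicator
of the pair of configurations having all balls in box `1`. -/
def xiGammaOne (hn : 0 < n) : Module.End F (TensorSpace F n d) :=
  intOp F (fun x y => if x = (fun _ => (⟨0, hn⟩ : Fin n)) ∧ y = (fun _ => (⟨0, hn⟩ : Fin n))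
    then (1 : F) else 0)

theorem Fintype.exists_comp_swap_eq_of_card_lt {ι X : Type*} [Fintype ι] [DecidableEq ι]
    [Fintype X] (hcard : Fintype.card X < Fintype.card ι) (u : ι → X) :
    ∃ i j, i ≠ j ∧ u ∘ Equiv.swap i j = u := by
  obtain ⟨i, j, hij, hu⟩ := Fintype.exists_ne_map_eq_of_card_lt u hcard
  refine ⟨i, j, hij, ?_⟩
  rw [Equiv.comp_swap_eq_update, hu, Function.update_eq_self, ← hu, Function.update_eq_self]

theorem LinearMap.eq_zero_of_sign_twisted {F ι X : Type*} [Field F] [Fintype ι] [DecidableEq ι]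
    [Fintype X] (h2 : (2 : F) ≠ 0) (hcard : Fintype.card X < Fintype.card ι)
    (φ : ((ι → X) → F) →ₗ[F] F)
    (hφ : ∀ (w : Equiv.Perm ι) (f : (ι → X) → F),
      φ (fun u => f (u ∘ w)) = ((Equiv.Perm.sign w : ℤ) : F) * φ f) :
    φ = 0 := by
  classical
  refine LinearMap.pi_ext fun u c => ?_
  obtain ⟨i, j, hij, hu⟩ := Fintype.exists_comp_swap_eq_of_card_lt hcard u
  have hfix :
      (fun t => Pi.single (M := fun _ => F) u c (t ∘ Equiv.swap i j)) = Pi.single u c := by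
    funext t
    have : t ∘ Equiv.swap i j = u ↔ t = u := by
      constructor
      · intro h
        calc t = (t ∘ Equiv.swap i j) ∘ Equiv.swap i j := by ext; simp
          _ = u := by rw [h, hu]
      · rintro rfl; exact hu
    simp only [Pi.single_apply, this]
  have hneg := hφ (Equiv.swap i j) (Pi.single u c)
  rw [hfix, Equiv.Perm.sign_swap hij] at hneg
  push_cast at hneg
  have : (2 : F) * φ (Pi.single u c) = 0 := by
    linear_combination hneg
  simpa using (mul_eq_zero.mp this).resolve_left h2

section

variable {F n d}

theorem MCond.apply_const_eq_zero (h2 : (2 : F) ≠ 0) (hnd : n < d)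
    {m : Module.End F (TensorSpace F n d)} (hm : MCond F n d m) (f : TensorSpace F n d)
    (a : Fin n) : m f (fun _ => a) = 0 :=
  LinearMap.congr_fun (LinearMap.eq_zero_of_sign_twisted h2 (by simpa using hnd)
    ((LinearMap.proj fun _ => a).comp m) fun w f => hm w f _) f

theorem xiGammaOne_apply (hn : 0 < n) (f : TensorSpace F n d) (v : Fin d → Fin n) :
    xiGammaOne F n d hn f v =
      if v = (fun _ => ⟨0, hn⟩) then f (fun _ => ⟨0, hn⟩) else 0 := by
  simp only [xiGammaOne, intOp, LinearMap.coe_mk, AddHom.coe_mk]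
  rw [Finset.sum_eq_single (fun _ => ⟨0, hn⟩)]
  · split_ifs <;> simp_all
  · intro u _ hu
    simp [hu]
  · simp

theorem xiGammaOne_mem_schurSubring (hn : 0 < n) : xiGammaOne F n d hn ∈ schurSubring F n d := by
  intro w f v
  have hconst : v ∘ w = (fun _ => ⟨0, hn⟩) ↔ v = fun _ => ⟨0, hn⟩ := by
    simp only [funext_iff, Function.comp_apply]
    exact (w.surjective.forall (p := fun i => v i = ⟨0, hn⟩)).symm
  simp only [xiGammaOne_apply, hconst]
  rfl

theorem xiGammaOne_ne_zero (hn : 0 < n) : xiGammaOne F n d hn ≠ 0 := by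
  intro h
  have := LinearMap.congr_fun h (Pi.single (fun _ => ⟨0, hn⟩) 1)
  have := congrFun this (fun _ => ⟨0, hn⟩)
  simp [xiGammaOne_apply] at this

theorem xiGammaOne_mul_eq_zero (h2 : (2 : F) ≠ 0) (hn : 0 < n) (hnd : n < d)
    {m : Module.End F (TensorSpace F n d)} (hm : m ∈ schurMinusSubgroup F n d) :
    xiGammaOne F n d hn * m = 0 := by
  ext f v
  simp [xiGammaOne_apply, hm.apply_const_eq_zero h2 hnd]

end

theorem GradedPair.not_injective_leftMul_of_annihilator {AS : Type*} [Ring AS]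
    (P : GradedPair AS) {s : AS} (hs : s ∈ P.S) (hs0 : s ≠ 0) (hann : ∀ m ∈ P.Sm, s * m = 0) :
    ¬ Function.Injective
      (fun s : P.S => fun m : P.Sm => (⟨s * m, P.smul_mem _ s.2 _ m.2⟩ : P.Sm)) := by
  intro hinj
  have : (⟨s, hs⟩ : P.S) = 0 := hinj <| funext fun m => Subtype.ext <| by simp [hann m m.2]
  exact hs0 (congrArg Subtype.val this)

/-- for `char F ≠ 2` and `n < d`, the canonical algebra homomorphism
`ψ : S_F(n,d) → End_{S_F(n,d)}(S_F⁻(n,d))` given by left multiplication fails to be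
injective: the basis element `ξ_{Γ₁}` (all `d` edges joining `1'` to `1`) is a nonzero
element of `S_F(n,d)` annihilating all of `S_F⁻(n,d)`. -/
theorem stmt_18 (h2 : (2 : F) ≠ 0) (hn : 0 < n) (hnd : n < d) :
    ¬ Function.Injective
        (fun s : (schurGradedPair F n d).S =>
          fun m : (schurGradedPair F n d).Sm =>
            (⟨(s : Module.End F (TensorSpace F n d)) * m,
              (schurGradedPair F n d).smul_mem _ s.2 _ m.2⟩ :
                (schurGradedPair F n d).Sm)) ∧
    xiGammaOne F n d hn ∈ schurSubring F n d ∧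
    xiGammaOne F n d hn ≠ 0 ∧
    ∀ m ∈ schurMinusSubgroup F n d, xiGammaOne F n d hn * m = 0 := by
  have hann : ∀ m ∈ schurMinusSubgroup F n d, xiGammaOne F n d hn * m = 0 :=
    fun _ hm => xiGammaOne_mul_eq_zero h2 hn hnd hm
  exact ⟨(schurGradedPair F n d).not_injective_leftMul_of_annihilator
      (xiGammaOne_mem_schurSubring hn) (xiGammaOne_ne_zero hn) hann,
    xiGammaOne_mem_schurSubring hn, xiGammaOne_ne_zero hn, hann⟩
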